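/- arXiv:math/0301157 — 7 statements merged into one kernel-verified Lean document; each statement's English description precedes it below -/
import Mathlib

section
/- Let a : ℕ × ℕ → ℚ be defined by the recursion a(0,d) = 4^d for all d ≥ 0, a(ℓ,0) = 0 for all ℓ ≥ 1, and a(ℓ,d) = 4(ℓ+1)·a(ℓ,d−1) + ℓ·a(ℓ−1,d−1) for all ℓ, d ≥ 1. Then for all ℓ, d ≥ 0, a(ℓ,d) = 4^(d−ℓ) · Σ_{j=0}^{ℓ} (−1)^j · binom(ℓ,j) · (ℓ+1−j)^d, where 4^(d−ℓ) denotes the rational number 4 raised to the (possibly negative) integer power d−ℓ. -/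
lemma key_stmt0 (m d : ℕ) :
    ∑ j ∈ Finset.range (m+1+1), (-1:ℚ)^j * (Nat.choose (m+1) j : ℚ) * ((m:ℚ)+1+1-(j:ℚ))^(d+1)
    = ((m:ℚ)+1+1) * ∑ j ∈ Finset.range (m+1+1), (-1:ℚ)^j * (Nat.choose (m+1) j : ℚ) * ((m:ℚ)+1+1-(j:ℚ))^d
    + ((m:ℚ)+1) * ∑ j ∈ Finset.range (m+1), (-1:ℚ)^j * (Nat.choose m j : ℚ) * ((m:ℚ)+1-(j:ℚ))^d := by
  have h : ∀ j ∈ Finset.range (m+1+1),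
      (-1:ℚ)^j * (Nat.choose (m+1) j : ℚ) * ((m:ℚ)+1+1-(j:ℚ))^(d+1)
      = ((m:ℚ)+1+1) * ((-1:ℚ)^j * (Nat.choose (m+1) j : ℚ) * ((m:ℚ)+1+1-(j:ℚ))^d)
        + (-1:ℚ)^j * (Nat.choose (m+1) j : ℚ) * (-(j:ℚ)) * ((m:ℚ)+1+1-(j:ℚ))^d := by
    intro j _; ring
  rw [Finset.sum_congr rfl h, Finset.sum_add_distrib, ← Finset.mul_sum]
  congr 1
  rw [Finset.sum_range_succ', Finset.mul_sum]
  simp only [Nat.cast_zero, neg_zero, mul_zero, zero_mul, add_zero]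
  apply Finset.sum_congr rfl
  intro i _
  have hc : ((m+1).choose (i+1) : ℚ) * ((i:ℚ)+1) = ((m:ℚ)+1) * (m.choose i : ℚ) := by
    have h' : ((m+1).choose (i+1) * (i+1) : ℕ) = ((m+1) * m.choose i : ℕ) := by
      simpa [Nat.succ_eq_add_one] using (Nat.add_one_mul_choose_eq m i).symm
    have := congrArg (Nat.cast : ℕ → ℚ) h'
    push_cast at this
    linarith [this]
  push_cast
  linear_combination ((-1:ℚ)^i * ((m:ℚ)+1-(i:ℚ))^d) * hc

/-- If `a : ℕ × ℕ → ℚ` satisfies `a (0, d) = 4 ^ d` for all `d`,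
`a (ℓ, 0) = 0` for `ℓ ≥ 1`, and
`a (ℓ, d) = 4 (ℓ+1) a (ℓ, d-1) + ℓ a (ℓ-1, d-1)` for `ℓ, d ≥ 1`, then
`a (ℓ, d) = 4 ^ (d - ℓ) * ∑_{j=0}^{ℓ} (-1)^j (ℓ choose j) (ℓ + 1 - j)^d`,
where `4 ^ (d - ℓ)` is an integer power of the rational number `4`. -/
theorem stmt_0 (a : ℕ × ℕ → ℚ)
    (h0 : ∀ d : ℕ, a (0, d) = 4 ^ d)
    (h1 : ∀ ℓ : ℕ, 1 ≤ ℓ → a (ℓ, 0) = 0)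
    (h2 : ∀ ℓ d : ℕ, 1 ≤ ℓ → 1 ≤ d →
      a (ℓ, d) = 4 * (ℓ + 1) * a (ℓ, d - 1) + ℓ * a (ℓ - 1, d - 1)) :
    ∀ ℓ d : ℕ, a (ℓ, d) = (4 : ℚ) ^ ((d : ℤ) - (ℓ : ℤ)) *
      ∑ j ∈ Finset.range (ℓ + 1),
        (-1 : ℚ) ^ j * (Nat.choose ℓ j : ℚ) * ((ℓ : ℚ) + 1 - (j : ℚ)) ^ d := by
  intro ℓ d
  induction d generalizing ℓ with
  | zero =>
    cases ℓ with
    | zero =>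
      rw [show ((0,0) : ℕ × ℕ) = (0, 0) from rfl, h0 0]
      norm_num
    | succ m =>
      rw [h1 (m+1) (by omega)]
      have halt : ∑ j ∈ Finset.range (m+2), (-1:ℚ)^j * ((m+1).choose j : ℚ) = 0 := by
        have := Int.alternating_sum_range_choose (n := m+1)
        simp only [Nat.succ_ne_zero, if_false] at this
        have := congrArg (Int.cast : ℤ → ℚ) this
        push_cast at this
        simpa using this
      rw [eq_comm]
      have : ∑ j ∈ Finset.range (m+1+1), (-1:ℚ)^j * ((m+1).choose j : ℚ) * ((↑(m+1):ℚ)+1-(j:ℚ))^0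
          = ∑ j ∈ Finset.range (m+2), (-1:ℚ)^j * ((m+1).choose j : ℚ) := by
        apply Finset.sum_congr rfl; intro j _; simp
      rw [this, halt, mul_zero]
  | succ d ih =>
    cases ℓ with
    | zero =>
      rw [h0]
      rw [show ((d+1:ℕ):ℤ) - ((0:ℕ):ℤ) = ((d+1:ℕ):ℤ) from by push_cast; ring, zpow_natCast]
      norm_num
    | succ m =>
      rw [h2 (m+1) (d+1) (by omega) (by omega)]
      simp only [Nat.add_sub_cancel]
      rw [ih (m+1), ih m]
      push_cast
      rw [show ((d:ℤ) + 1 - ((m:ℤ)+1)) = (d:ℤ) - (m:ℤ) from by ring]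
      rw [key_stmt0 m d]
      have h4 : (4:ℚ) ^ ((d:ℤ) - ((m:ℤ)+1)) * 4 = (4:ℚ) ^ ((d:ℤ) - (m:ℤ)) := by
        rw [show (d:ℤ) - ((m:ℤ)+1) = (d:ℤ) - (m:ℤ) - 1 from by ring,
          zpow_sub_one₀ (by norm_num : (4:ℚ) ≠ 0)]
        field_simp
      linear_combination (((m:ℚ)+1+1) *
        ∑ x ∈ Finset.range (m+1+1), (-1:ℚ)^x * ((m+1).choose x : ℚ) * ((m:ℚ)+1+1-(x:ℚ))^d) * h4
end

section
/- Let b : ℕ × ℕ → ℚ be defined by the recursion b(1,d) = (−2)^(d−1) for all d ≥ 1, b(ℓ,1) = 0 for all ℓ ≥ 2, and b(ℓ,d) = b(ℓ−1,d−1) − 2ℓ·b(ℓ,d−1) for all ℓ, d ≥ 2. Then for all ℓ, d ≥ 1, b(ℓ,d) = ((−1)^(d−1) · 2^(d−ℓ) / (ℓ−1)!) · Σ_{j=0}^{ℓ−1} (−1)^j · binom(ℓ−1,j) · (j+1)^(d−1), where 2^(d−ℓ) denotes the rational number 2 raised to the (possibly negative) integer power d−ℓ. -/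
lemma alt_sum_zero (N : ℕ) :
    ∑ j ∈ Finset.range (N + 2), (-1 : ℚ) ^ j * ((N + 1).choose j : ℚ) = 0 := by
  have h := Int.alternating_sum_range_choose (n := N + 1)
  simp only [Nat.succ_ne_zero, if_false] at h
  exact_mod_cast h

lemma sum_id (L D : ℕ) :
    ∑ j ∈ Finset.range (L + 2), (-1 : ℚ) ^ j * ((L + 1).choose j : ℚ) * ((j : ℚ) + 1) ^ (D + 1)
    = (L + 2 : ℚ) * ∑ j ∈ Finset.range (L + 2), (-1 : ℚ) ^ j * ((L + 1).choose j : ℚ) * ((j : ℚ) + 1) ^ D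
      - (L + 1 : ℚ) * ∑ j ∈ Finset.range (L + 1), (-1 : ℚ) ^ j * (L.choose j : ℚ) * ((j : ℚ) + 1) ^ D := by
  have hext : ∑ j ∈ Finset.range (L + 1), (-1 : ℚ) ^ j * (L.choose j : ℚ) * ((j : ℚ) + 1) ^ D
      = ∑ j ∈ Finset.range (L + 2), (-1 : ℚ) ^ j * (L.choose j : ℚ) * ((j : ℚ) + 1) ^ D := by
    rw [Finset.sum_range_succ (n := L + 1)]
    simp [Nat.choose_succ_self]
  rw [hext, Finset.mul_sum, Finset.mul_sum, ← Finset.sum_sub_distrib]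
  refine Finset.sum_congr rfl fun j hj => ?_
  have hjle : j ≤ L + 1 := Nat.lt_succ_iff.mp (Finset.mem_range.mp hj)
  have hkey : ((L : ℚ) + 1) * (L.choose j : ℚ) = ((L : ℚ) + 2 - ((j : ℚ) + 1)) * ((L + 1).choose j : ℚ) := by
    have := Nat.choose_mul_succ_eq L j
    have h2 : (L.choose j : ℚ) * (L + 1) = ((L + 1).choose j : ℚ) * ((L + 1 - j : ℕ) : ℚ) := by
      exact_mod_cast congrArg (Nat.cast : ℕ → ℚ) this
    rw [Nat.cast_sub hjle] at h2
    push_cast at h2 ⊢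
    linarith [h2]
  linear_combination (-1 : ℚ) ^ j * ((j : ℚ) + 1) ^ D * hkey


/-- If `b : ℕ × ℕ → ℚ` satisfies `b (1, d) = (-2) ^ (d - 1)` for all `d ≥ 1`,
`b (ℓ, 1) = 0` for `ℓ ≥ 2`, and `b (ℓ, d) = b (ℓ-1, d-1) - 2 ℓ b (ℓ, d-1)` for `ℓ, d ≥ 2`,
then for all `ℓ, d ≥ 1`,
`b (ℓ, d) = ((-1)^(d-1) 2^(d-ℓ) / (ℓ-1)!) * ∑_{j=0}^{ℓ-1} (-1)^j (ℓ-1 choose j) (j+1)^(d-1)`,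
where `2 ^ (d - ℓ)` is an integer power of the rational number `2`. -/
theorem stmt_1 (b : ℕ × ℕ → ℚ)
    (h0 : ∀ d : ℕ, 1 ≤ d → b (1, d) = (-2 : ℚ) ^ (d - 1))
    (h1 : ∀ ℓ : ℕ, 2 ≤ ℓ → b (ℓ, 1) = 0)
    (h2 : ∀ ℓ d : ℕ, 2 ≤ ℓ → 2 ≤ d →
      b (ℓ, d) = b (ℓ - 1, d - 1) - 2 * ℓ * b (ℓ, d - 1)) :
    ∀ ℓ d : ℕ, 1 ≤ ℓ → 1 ≤ d →
      b (ℓ, d) = ((-1 : ℚ) ^ (d - 1) * (2 : ℚ) ^ ((d : ℤ) - (ℓ : ℤ)) / (Nat.factorial (ℓ - 1) : ℚ)) *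
        ∑ j ∈ Finset.range ℓ,
          (-1 : ℚ) ^ j * (Nat.choose (ℓ - 1) j : ℚ) * ((j : ℚ) + 1) ^ (d - 1) := by
  have key : ∀ D L : ℕ, b (L + 1, D + 1) =
      ((-1 : ℚ) ^ D * (2 : ℚ) ^ ((D : ℤ) - (L : ℤ)) / (Nat.factorial L : ℚ)) *
        ∑ j ∈ Finset.range (L + 1),
          (-1 : ℚ) ^ j * (Nat.choose L j : ℚ) * ((j : ℚ) + 1) ^ D := by
    intro D
    induction D with
    | zero =>
      intro L
      cases L with
      | zero => simpa using h0 1 le_rfl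
      | succ N =>
        rw [h1 (N + 2) (by omega)]
        have := alt_sum_zero N
        simp only [pow_zero, mul_one] at *
        rw [this, mul_zero]
    | succ D ih =>
      intro L
      cases L with
      | zero =>
        rw [h0 (D + 2) (by omega), show D + 2 - 1 = D + 1 from rfl, neg_pow]
        simp [zpow_natCast]
        norm_cast
      | succ N =>
        have hrec := h2 (N + 2) (D + 2) (by omega) (by omega)
        simp only [show N + 2 - 1 = N + 1 from rfl, show D + 2 - 1 = D + 1 from rfl] at hrec
        rw [hrec, ih N, ih (N + 1), sum_id N D]
        have hx : (2 : ℚ) ^ ((D : ℤ) - N) ≠ 0 := zpow_ne_zero _ two_ne_zero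
        have e1 : ((D + 1 : ℕ) : ℤ) - ((N + 1 : ℕ) : ℤ) = (D : ℤ) - N := by push_cast; ring
        have e2 : (D : ℤ) - ((N + 1 : ℕ) : ℤ) = ((D : ℤ) - N) - 1 := by push_cast; ring
        rw [e1, e2, show ((D : ℤ) - N - 1) = ((D : ℤ) - N) + (-1) by ring,
          zpow_add₀ two_ne_zero, zpow_neg_one]
        have hf : (Nat.factorial N : ℚ) ≠ 0 := Nat.cast_ne_zero.mpr (Nat.factorial_ne_zero N)
        have hf2 : (Nat.factorial (N + 1) : ℚ) = (N + 1) * Nat.factorial N := by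
          rw [Nat.factorial_succ]; push_cast; ring
        rw [hf2]
        set x := (2 : ℚ) ^ ((D : ℤ) - N) with hxdef
        push_cast
        field_simp
        ring
  intro ℓ d hℓ hd
  obtain ⟨L, rfl⟩ : ∃ L, ℓ = L + 1 := ⟨ℓ - 1, by omega⟩
  obtain ⟨D, rfl⟩ : ∃ D, d = D + 1 := ⟨d - 1, by omega⟩
  simpa using key D L
end

section
/- Let p, q be real numbers and let k be a positive integer. Then, as formal power series in one variable X over ℝ, one has (1 − V_k(p,q)·X + q^k·X²) · Σ_{n≥0} U_{n·k}(p,q)·X^n = U_k(p,q)·X; that is, the generating function of the sequence (U_{n·k}(p,q))_{n≥0} equals X·U_k(p,q)/(1 − V_k(p,q)·X + q^k·X²). -/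
/-- The generalized Fibonacci sequence: `U 0 = 0`, `U 1 = 1`,
`U (n+2) = p * U (n+1) - q * U n`. -/
def genU (p q : ℝ) : ℕ → ℝ
  | 0 => 0
  | 1 => 1
  | (n + 2) => p * genU p q (n + 1) - q * genU p q n

/-- The generalized Lucas sequence: `V 0 = 2`, `V 1 = p`,
`V (n+2) = p * V (n+1) - q * V n`. -/
def genV (p q : ℝ) : ℕ → ℝ
  | 0 => 2
  | 1 => p
  | (n + 2) => p * genV p q (n + 1) - q * genV p q n

lemma genU_key (p q : ℝ) : ∀ (k a : ℕ),
    genU p q (a + 2*k) + q^k * genU p q a = genV p q k * genU p q (a+k) := by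
  intro k
  induction k using Nat.twoStepInduction with
  | zero => intro a; simp [genV]; ring
  | one =>
    intro a
    have h : a + 2*1 = a + 2 := by ring
    simp [h, genU, genV]
  | more n ih ih1 =>
    intro a
    have h1 := ih1 (a+1)
    have h0 := ih (a+2)
    have e1 : a + 1 + 2*(n+1) = a + 2*n + 3 := by ring
    have e2 : a + 2 + 2*n = a + 2*n + 2 := by ring
    have e3 : a + 2*(n+2) = (a + 2*n + 2) + 2 := by ring
    have e4 : a + 1 + (n+1) = a + (n+2) := by ring
    have e5 : a + 2 + n = a + (n+2) := by ring
    rw [e1] at h1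
    rw [e2, e5] at h0
    rw [e4] at h1
    rw [e3]
    have hU : genU p q (a+2) = p * genU p q (a+1) - q * genU p q a := rfl
    have hU2 : genU p q ((a+2*n+2)+2) = p * genU p q (a+2*n+3) - q * genU p q (a+2*n+2) := rfl
    have hV : genV p q (n+2) = p * genV p q (n+1) - q * genV p q n := rfl
    rw [hU2, hV]
    linear_combination p*h1 - q*h0 + q^(n+1)*hU

/-- As formal power series over `ℝ`,
`(1 - V_k X + q^k X²) * ∑_{n ≥ 0} U_{n k} Xⁿ = U_k X`. -/
theorem stmt_2 (p q : ℝ) (k : ℕ) (hk : 1 ≤ k) :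
    (1 - PowerSeries.C (genV p q k) * PowerSeries.X
        + PowerSeries.C (q ^ k) * PowerSeries.X ^ 2) *
      PowerSeries.mk (fun n => genU p q (n * k)) =
    PowerSeries.C (genU p q k) * PowerSeries.X := by
  have expand : (1 - PowerSeries.C (genV p q k) * PowerSeries.X
        + PowerSeries.C (q ^ k) * PowerSeries.X ^ 2) *
      PowerSeries.mk (fun n => genU p q (n * k)) =
      PowerSeries.mk (fun n => genU p q (n * k))
      - PowerSeries.C (genV p q k) * (PowerSeries.X * PowerSeries.mk (fun n => genU p q (n * k)))
      + PowerSeries.C (q ^ k) * (PowerSeries.X ^ 2 * PowerSeries.mk (fun n => genU p q (n * k))) := by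
    ring
  rw [expand]
  ext n
  rcases n with _ | _ | n
  · simp [genU]
  · simp only [map_add, map_sub, PowerSeries.coeff_C_mul, PowerSeries.coeff_mk,
      PowerSeries.coeff_one]
    rw [show (1:ℕ) = 0 + 1 from rfl, PowerSeries.coeff_succ_X_mul, pow_two, mul_assoc,
      PowerSeries.coeff_succ_X_mul]
    simp [genU, PowerSeries.coeff_zero_eq_constantCoeff]
  · have h2 : n + 2 = n + 2 := rfl
    simp only [map_add, map_sub, PowerSeries.coeff_C_mul, PowerSeries.coeff_mk]
    rw [show (n+2 : ℕ) = (n+1) + 1 from rfl, PowerSeries.coeff_succ_X_mul]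
    rw [show (n+1+1 : ℕ) = n + 2 from rfl]
    rw [show (PowerSeries.X : PowerSeries ℝ)^2 * PowerSeries.mk (fun n => genU p q (n * k)) = PowerSeries.X * (PowerSeries.X * PowerSeries.mk (fun n => genU p q (n * k))) by rw [pow_two, mul_assoc]]
    rw [show (n+2 : ℕ) = (n+1)+1 from rfl, PowerSeries.coeff_succ_X_mul, PowerSeries.coeff_succ_X_mul]
    simp only [PowerSeries.coeff_mk]
    have key := genU_key p q k (n*k)
    have e : (n+2)*k = n*k + 2*k := by ring
    have e2 : (n+1)*k = n*k + k := by ring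
    rw [e, e2]
    simp only [PowerSeries.coeff_X, Nat.succ_ne_zero, if_neg (by omega : ¬ (n+1+1 = 1))]
    linarith [key]
end

section
/- Let p, q be real numbers, let k be a positive integer with U_k(p,q) ≠ 0, let d ≥ 1, and let F_k : ℝ → ℝ be the function F_k(x) = U_k(p,q)/(1 − V_k(p,q)·x + q^k·x²). Then for every real x with 1 − V_k(p,q)·x + q^k·x² ≠ 0, the following identity holds: Σ_{j=0}^{d} (4q^k)^(d−j) · (Σ_{i=0}^{j} (−1)^i · binom(j,i) · (j+1−i)^d) · ((V_k(p,q)² − 4q^k)/U_k(p,q))^j · F_k(x)^(j+1) = Σ_{j=1}^{d} ((−1)^(d−1) · (2q^k)^(d−j) / (j−1)!) · (Σ_{i=0}^{j−1} (−1)^i · binom(j−1,i) · (i+1)^(d−1)) · (V_k(p,q) − 2q^k·x)^j · F_k^{(j)}(x), where F_k^{(j)}(x) denotes the j-th derivative of F_k at x. -/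
noncomputable def Sc (d j : ℕ) : ℝ :=
  ∑ i ∈ Finset.range (j+1), (-1:ℝ)^i * (j.choose i : ℝ) * ((j:ℝ)+1-(i:ℝ))^d

lemma Sc_zero_left (d : ℕ) : Sc d 0 = 1 := by simp [Sc]

lemma Sc_rec (d j : ℕ) : Sc (d+1) j = ((j:ℝ)+1) * Sc d j + (j:ℝ) * Sc d (j-1) := by
  rcases Nat.eq_zero_or_eq_succ_pred j with hj | hj
  · subst hj; simp [Sc_zero_left]
  obtain ⟨m, rfl⟩ : ∃ m, j = m + 1 := ⟨j - 1, hj⟩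
  have key : ∀ i ∈ Finset.range (m+1+1),
      (-1:ℝ)^i * (((m+1).choose i : ℕ) : ℝ) * (((m+1:ℕ):ℝ)+1-(i:ℝ))^(d+1)
      = (((m+1:ℕ):ℝ)+1) * ((-1:ℝ)^i * (((m+1).choose i : ℕ) : ℝ) * (((m+1:ℕ):ℝ)+1-(i:ℝ))^d)
        - (i:ℝ) * ((-1:ℝ)^i * (((m+1).choose i : ℕ) : ℝ) * (((m+1:ℕ):ℝ)+1-(i:ℝ))^d) := by
    intro i _; rw [pow_succ]; ring
  rw [Sc, Finset.sum_congr rfl key, Finset.sum_sub_distrib, ← Finset.mul_sum]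
  have h2 : ∑ i ∈ Finset.range (m+1+1), (i:ℝ) * ((-1:ℝ)^i * (((m+1).choose i : ℕ) : ℝ) * (((m+1:ℕ):ℝ)+1-(i:ℝ))^d)
      = -(((m+1:ℕ):ℝ) * Sc d m) := by
    rw [Finset.sum_range_succ']
    have h3 : ∀ i ∈ Finset.range (m+1),
        ((i+1:ℕ):ℝ) * ((-1:ℝ)^(i+1) * (((m+1).choose (i+1) : ℕ) : ℝ) * (((m+1:ℕ):ℝ)+1-((i+1:ℕ):ℝ))^d)
        = -((((m+1:ℕ):ℝ)) * ((-1:ℝ)^i * ((m.choose i : ℕ) : ℝ) * ((m:ℝ)+1-(i:ℝ))^d)) := by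
      intro i _
      have hc : (i+1) * ((m+1).choose (i+1)) = (m+1) * (m.choose i) := by
        rw [mul_comm]; exact (Nat.add_one_mul_choose_eq m i).symm
      have hc' : ((i:ℝ)+1) * (((m+1).choose (i+1) : ℕ) : ℝ) = ((m:ℝ)+1) * ((m.choose i : ℕ) : ℝ) := by
        exact_mod_cast congrArg (Nat.cast (R := ℝ)) hc
      push_cast
      rw [pow_succ]
      linear_combination (-((m:ℝ)+1-(i:ℝ))^d * (-1:ℝ)^i) * hc'
    rw [Finset.sum_congr rfl h3]
    rw [Sc, Finset.mul_sum, ← Finset.sum_neg_distrib]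
    simp
  rw [h2]
  simp only [Nat.add_sub_cancel, Sc]
  push_cast
  ring

lemma Sc_zero (d : ℕ) : ∀ j, d < j → Sc d j = 0 := by
  induction d with
  | zero =>
    intro j hj
    obtain ⟨m, rfl⟩ : ∃ m, j = m + 1 := ⟨j - 1, by omega⟩
    have h2 : Sc 0 (m+1) = (((∑ i ∈ Finset.range (m+1+1), (-1:ℤ)^i * ((m+1).choose i)) : ℤ) : ℝ) := by
      rw [Sc]; push_cast
      refine Finset.sum_congr rfl fun i _ => ?_
      ring
    rw [h2, Int.alternating_sum_range_choose]
    simp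
  | succ d ih =>
    intro j hj
    rw [Sc_rec, ih j (by omega), ih (j-1) (by omega)]
    ring

lemma T_eq (e m : ℕ) :
    ∑ i ∈ Finset.range (m+1), (-1:ℝ)^i * (m.choose i : ℝ) * ((i:ℝ)+1)^e
      = (-1:ℝ)^m * Sc e m := by
  rw [Sc, ← Finset.sum_range_reflect, Finset.mul_sum]
  refine Finset.sum_congr rfl ?_
  intro i hi
  have hi' : i ≤ m := by simpa [Nat.lt_succ_iff] using hi
  simp only [Nat.add_sub_cancel]
  have h2 : (-1:ℝ)^(m-i) * (-1:ℝ)^i = (-1:ℝ)^m := by rw [← pow_add]; congr 1; omega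
  have h3 : ((-1:ℝ)^i)*((-1:ℝ)^i) = 1 := by rw [← pow_add, ← two_mul, pow_mul]; norm_num
  have h1 : (-1:ℝ)^(m-i) = (-1:ℝ)^m * (-1:ℝ)^i := by
    linear_combination ((-1:ℝ)^i) * h2 - ((-1:ℝ)^(m-i)) * h3
  rw [h1, Nat.choose_symm hi', Nat.cast_sub hi']
  ring


noncomputable def Ff (U V Q : ℝ) : ℝ → ℝ := fun x => U / (1 - V*x + Q*x^2)

lemma hs_open (V Q : ℝ) : IsOpen {x : ℝ | 1 - V*x + Q*x^2 ≠ 0} := by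
  have hc : Continuous fun x : ℝ => 1 - V*x + Q*x^2 := by continuity
  exact isOpen_compl_singleton.preimage hc

lemma hF_contDiffOn (U V Q : ℝ) :
    ContDiffOn ℝ (⊤:ℕ∞) (Ff U V Q) {x : ℝ | 1 - V*x + Q*x^2 ≠ 0} := by
  apply ContDiffOn.div contDiffOn_const
  · exact ContDiff.contDiffOn (by fun_prop)
  · exact fun x hx => hx

lemma iter_contDiffOn (U V Q : ℝ) (n : ℕ) :
    ContDiffOn ℝ (⊤:ℕ∞) (iteratedDeriv n (Ff U V Q)) {x : ℝ | 1 - V*x + Q*x^2 ≠ 0} := by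
  induction n with
  | zero => simpa [iteratedDeriv_zero] using hF_contDiffOn U V Q
  | succ n ih =>
    rw [iteratedDeriv_succ]
    exact ih.deriv_of_isOpen (hs_open V Q) (by exact_mod_cast le_top)

lemma iter_diffAt (U V Q : ℝ) (n : ℕ) (x : ℝ) (hx : 1 - V*x + Q*x^2 ≠ 0) :
    DifferentiableAt ℝ (iteratedDeriv n (Ff U V Q)) x := by
  have h := ((iter_contDiffOn U V Q n).contDiffAt
    ((hs_open V Q).mem_nhds hx)).differentiableAt (by simp)
  exact h

lemma iter_hasDerivAt (U V Q : ℝ) (n : ℕ) (x : ℝ) (hx : 1 - V*x + Q*x^2 ≠ 0) :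
    HasDerivAt (iteratedDeriv n (Ff U V Q)) (iteratedDeriv (n+1) (Ff U V Q) x) x := by
  rw [iteratedDeriv_succ]
  exact (iter_diffAt U V Q n x hx).hasDerivAt

lemma hF_hasDerivAt (U V Q : ℝ) (hU : U ≠ 0) (x : ℝ) (hx : 1 - V*x + Q*x^2 ≠ 0) :
    HasDerivAt (Ff U V Q) ((V - 2*Q*x) * (Ff U V Q x)^2 / U) x := by
  have hD : HasDerivAt (fun y : ℝ => 1 - V*y + Q*y^2) (-V + Q*(2*x)) x := by
    have h1 : HasDerivAt (fun y : ℝ => y) 1 x := hasDerivAt_id x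
    have := ((hasDerivAt_const x (1:ℝ)).fun_sub (h1.const_mul V)).fun_add
      ((h1.fun_pow 2).const_mul Q)
    exact this.congr_deriv (by norm_num)
  have := (hasDerivAt_const x U).div hD hx
  refine this.congr_deriv ?_
  simp only [Ff]
  field_simp
  ring




noncomputable def Lf (U V Q : ℝ) (d : ℕ) (x : ℝ) : ℝ :=
  ∑ j ∈ Finset.range (d+1),
    (4*Q)^(d-j) * Sc d j * ((V^2-4*Q)/U)^j * (Ff U V Q x)^(j+1)

lemma Lf_hasDerivAt (U V Q : ℝ) (hU : U ≠ 0) (d : ℕ) (x : ℝ)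
    (hx : 1 - V*x + Q*x^2 ≠ 0) :
    HasDerivAt (fun y => Lf U V Q d y)
      (∑ j ∈ Finset.range (d+1),
        (4*Q)^(d-j) * Sc d j * ((V^2-4*Q)/U)^j *
          (((j:ℝ)+1) * (Ff U V Q x)^j * ((V - 2*Q*x) * (Ff U V Q x)^2 / U))) x := by
  unfold Lf
  apply HasDerivAt.fun_sum
  intro j hj
  have h := ((hF_hasDerivAt U V Q hU x hx).pow (j+1)).const_mul
    ((4*Q)^(d-j) * Sc d j * ((V^2-4*Q)/U)^j)
  refine h.congr_deriv ?_
  push_cast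
  ring

lemma hFD (U V Q : ℝ) (x : ℝ) (hx : 1 - V*x + Q*x^2 ≠ 0) :
    Ff U V Q x * (1 - V*x + Q*x^2) = U := by
  rw [Ff]; exact div_mul_cancel₀ U hx

lemma key_alg (U V Q x A : ℝ) (hU : U ≠ 0) (hA : A * (1 - V*x + Q*x^2) = U) :
    (V-2*Q*x) * ((V - 2*Q*x) * A^2 / U) = ((V^2-4*Q)/U)*A^2 + 4*Q*A := by
  field_simp
  linear_combination (4*Q*A) * hA

lemma Lf_rec (U V Q : ℝ) (hU : U ≠ 0) (d : ℕ) (x : ℝ)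
    (hx : 1 - V*x + Q*x^2 ≠ 0) :
    Lf U V Q (d+1) x = (V - 2*Q*x) * deriv (fun y => Lf U V Q d y) x := by
  rw [(Lf_hasDerivAt U V Q hU d x hx).deriv]
  set A := Ff U V Q x with hA
  set E := (V^2-4*Q)/U with hE
  have hk := key_alg U V Q x A hU (hFD U V Q x hx)
  rw [Lf]
  have e1 : ∀ j ∈ Finset.range (d+1+1),
      (4*Q)^(d+1-j) * Sc (d+1) j * E^j * A^(j+1)
      = (4*Q)^(d+1-j) * (((j:ℝ)+1) * Sc d j) * E^j * A^(j+1)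
        + (4*Q)^(d+1-j) * ((j:ℝ) * Sc d (j-1)) * E^j * A^(j+1) := by
    intro j _; rw [Sc_rec]; ring
  rw [Finset.sum_congr rfl e1, Finset.sum_add_distrib]
  rw [Finset.sum_range_succ (fun j => (4*Q)^(d+1-j) * (((j:ℝ)+1) * Sc d j) * E^j * A^(j+1))]
  rw [Sc_zero d (d+1) (by omega)]
  rw [Finset.sum_range_succ' (fun j => (4*Q)^(d+1-j) * (((j:ℝ) * Sc d (j-1))) * E^j * A^(j+1))]
  simp only [Nat.cast_zero, zero_mul, mul_zero, add_zero, Nat.add_sub_cancel, Nat.cast_add,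
    Nat.cast_one]
  rw [Finset.mul_sum, ← Finset.sum_add_distrib]
  refine Finset.sum_congr rfl ?_
  intro j hj
  have hj' : j ≤ d := by simpa [Nat.lt_succ_iff] using hj
  have hp : (4*Q)^(d+1-j) = (4*Q) * (4*Q)^(d-j) := by
    rw [← pow_succ']; congr 1; omega
  have hp2 : d + 1 - (j+1) = d - j := by omega
  rw [hp, hp2]
  linear_combination (-((4*Q)^(d-j) * Sc d j * E^j * (((j:ℝ)+1) * A^j))) * hk

noncomputable def Rf (U V Q : ℝ) (d : ℕ) (x : ℝ) : ℝ :=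
  ∑ m ∈ Finset.range d,
    (-(2*Q))^(d-1-m) * Sc (d-1) m / (Nat.factorial m : ℝ) * (V-2*Q*x)^(m+1) *
      iteratedDeriv (m+1) (Ff U V Q) x

lemma Rf_hasDerivAt (U V Q : ℝ) (d : ℕ) (x : ℝ)
    (hx : 1 - V*x + Q*x^2 ≠ 0) :
    HasDerivAt (fun y => Rf U V Q d y)
      (∑ m ∈ Finset.range d,
        ((-(2*Q))^(d-1-m) * Sc (d-1) m / (Nat.factorial m : ℝ) *
            (((m:ℝ)+1) * (V-2*Q*x)^m * (-(2*Q))) * iteratedDeriv (m+1) (Ff U V Q) x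
          + (-(2*Q))^(d-1-m) * Sc (d-1) m / (Nat.factorial m : ℝ) * (V-2*Q*x)^(m+1) *
            iteratedDeriv (m+2) (Ff U V Q) x)) x := by
  unfold Rf
  apply HasDerivAt.fun_sum
  intro m hm
  have hB : HasDerivAt (fun y : ℝ => V - 2*Q*y) (-(2*Q)) x := by
    simpa using (hasDerivAt_const x V).fun_sub ((hasDerivAt_id x).const_mul (2*Q))
  have h := (((hB.fun_pow (m+1)).const_mul
      ((-(2*Q))^(d-1-m) * Sc (d-1) m / (Nat.factorial m : ℝ))).mul
    (iter_hasDerivAt U V Q (m+1) x hx))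
  refine h.congr_deriv ?_
  push_cast
  ring

lemma Rf_rec (U V Q : ℝ) (d : ℕ) (hd : 1 ≤ d) (x : ℝ)
    (hx : 1 - V*x + Q*x^2 ≠ 0) :
    Rf U V Q (d+1) x = (V - 2*Q*x) * deriv (fun y => Rf U V Q d y) x := by
  obtain ⟨e, rfl⟩ : ∃ e, d = e + 1 := ⟨d - 1, by omega⟩
  rw [(Rf_hasDerivAt U V Q (e+1) x hx).deriv]
  set B := V - 2*Q*x with hB
  rw [Rf]
  simp only [Nat.add_sub_cancel]
  have e1 : ∀ m ∈ Finset.range (e+1+1),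
      (-(2*Q))^(e+1-m) * Sc (e+1) m / (Nat.factorial m : ℝ) * B^(m+1) *
        iteratedDeriv (m+1) (Ff U V Q) x
      = (-(2*Q))^(e+1-m) * (((m:ℝ)+1) * Sc e m) / (Nat.factorial m : ℝ) * B^(m+1) *
          iteratedDeriv (m+1) (Ff U V Q) x
        + (-(2*Q))^(e+1-m) * ((m:ℝ) * Sc e (m-1)) / (Nat.factorial m : ℝ) * B^(m+1) *
          iteratedDeriv (m+1) (Ff U V Q) x := by
    intro m _; rw [Sc_rec]; ring
  rw [Finset.sum_congr rfl e1, Finset.sum_add_distrib]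
  rw [Finset.sum_range_succ (fun m => (-(2*Q))^(e+1-m) * (((m:ℝ)+1) * Sc e m) /
    (Nat.factorial m : ℝ) * B^(m+1) * iteratedDeriv (m+1) (Ff U V Q) x)]
  rw [Sc_zero e (e+1) (by omega)]
  rw [Finset.sum_range_succ' (fun m => (-(2*Q))^(e+1-m) * (((m:ℝ)) * Sc e (m-1)) /
    (Nat.factorial m : ℝ) * B^(m+1) * iteratedDeriv (m+1) (Ff U V Q) x)]
  simp only [Nat.cast_zero, zero_mul, mul_zero, zero_div, zero_mul, add_zero, Nat.add_sub_cancel,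
    Nat.cast_add, Nat.cast_one]
  rw [Finset.mul_sum, ← Finset.sum_add_distrib]
  refine Finset.sum_congr rfl ?_
  intro m hm
  have hm' : m ≤ e := by simpa [Nat.lt_succ_iff] using hm
  have hp : (-(2*Q))^(e+1-m) = (-(2*Q)) * (-(2*Q))^(e-m) := by
    rw [← pow_succ']; congr 1; omega
  have hp2 : e + 1 - (m+1) = e - m := by omega
  have hfac : ((Nat.factorial (m+1) : ℕ) : ℝ) = ((m:ℝ)+1) * (Nat.factorial m : ℝ) := by
    rw [Nat.factorial_succ]; push_cast; ring
  have hfne : (Nat.factorial m : ℝ) ≠ 0 := Nat.cast_ne_zero.mpr (Nat.factorial_ne_zero m)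
  rw [hp, hp2, hfac]
  field_simp
  ring




lemma base_case (U V Q : ℝ) (hU : U ≠ 0) (x : ℝ) (hx : 1 - V*x + Q*x^2 ≠ 0) :
    Lf U V Q 1 x = Rf U V Q 1 x := by
  have hk := key_alg U V Q x (Ff U V Q x) hU (hFD U V Q x hx)
  have hS10 : Sc 1 0 = 1 := by norm_num [Sc]
  have hS11 : Sc 1 1 = 1 := by norm_num [Sc, Finset.sum_range_succ]
  have hS00 : Sc 0 0 = 1 := by norm_num [Sc]
  rw [Lf, Rf]
  simp only [Finset.sum_range_succ, Finset.sum_range_zero, hS10, hS11, hS00,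
    Nat.factorial_zero]
  norm_num [iteratedDeriv_one]
  rw [(hF_hasDerivAt U V Q hU x hx).deriv]
  linear_combination hk - (8*Q*Ff U V Q x/U) * hFD U V Q x hx - (8*Q*Ff U V Q x) * (mul_inv_cancel₀ hU)

lemma main_eq (U V Q : ℝ) (hU : U ≠ 0) :
    ∀ d, 1 ≤ d → ∀ x, 1 - V*x + Q*x^2 ≠ 0 → Lf U V Q d x = Rf U V Q d x := by
  intro d
  induction d with
  | zero => omega
  | succ d ih =>
    intro _ x hx
    rcases Nat.eq_zero_or_pos d with h0 | hpos
    · subst h0; exact base_case U V Q hU x hx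
    · rw [Lf_rec U V Q hU d x hx, Rf_rec U V Q d hpos x hx]
      congr 1
      apply Filter.EventuallyEq.deriv_eq
      exact Filter.eventuallyEq_of_mem ((hs_open V Q).mem_nhds hx)
        (fun y hy => ih hpos y hy)


/-- The differential identity satisfied by
`F_k(x) = U_k / (1 - V_k x + q^k x²)` at every point where the denominator
does not vanish. Here `iteratedDeriv j` is the `j`-th derivative. -/
theorem stmt_3 (p q : ℝ) (k : ℕ) (hk : 1 ≤ k) (hU : genU p q k ≠ 0)
    (d : ℕ) (hd : 1 ≤ d)
    (F : ℝ → ℝ) (hF : F = fun x => genU p q k / (1 - genV p q k * x + q ^ k * x ^ 2))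
    (x : ℝ) (hx : 1 - genV p q k * x + q ^ k * x ^ 2 ≠ 0) :
    ∑ j ∈ Finset.range (d + 1),
      (4 * q ^ k) ^ (d - j) *
        (∑ i ∈ Finset.range (j + 1),
          (-1 : ℝ) ^ i * (Nat.choose j i : ℝ) * ((j : ℝ) + 1 - (i : ℝ)) ^ d) *
        (((genV p q k) ^ 2 - 4 * q ^ k) / genU p q k) ^ j * (F x) ^ (j + 1) =
    ∑ j ∈ Finset.Icc 1 d,
      ((-1 : ℝ) ^ (d - 1) * (2 * q ^ k) ^ (d - j) / (Nat.factorial (j - 1) : ℝ)) *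
        (∑ i ∈ Finset.range j,
          (-1 : ℝ) ^ i * (Nat.choose (j - 1) i : ℝ) * ((i : ℝ) + 1) ^ (d - 1)) *
        (genV p q k - 2 * q ^ k * x) ^ j * iteratedDeriv j F x := by
  set U := genU p q k with hUdef
  set V := genV p q k with hVdef
  set Q := q ^ k with hQdef
  have hFf : F = Ff U V Q := hF
  subst hFf
  have hmain := main_eq U V Q hU d hd x hx
  have hLeq : Lf U V Q d x
      = ∑ j ∈ Finset.range (d + 1),
        (4 * Q) ^ (d - j) *
          (∑ i ∈ Finset.range (j + 1),
            (-1 : ℝ) ^ i * (Nat.choose j i : ℝ) * ((j : ℝ) + 1 - (i : ℝ)) ^ d) *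
          ((V ^ 2 - 4 * Q) / U) ^ j * (Ff U V Q x) ^ (j + 1) := by
    rw [Lf]
    exact Finset.sum_congr rfl fun j _ => by rw [Sc]
  rw [← hLeq, hmain, Rf]
  rw [show Finset.Icc 1 d = Finset.Ico 1 (d+1) from (Finset.Ico_add_one_right_eq_Icc 1 d).symm,
    Finset.sum_Ico_eq_sum_range]
  simp only [Nat.add_sub_cancel]
  refine Finset.sum_congr rfl ?_
  intro i hi
  have hi' : i ≤ d - 1 := by
    have := Finset.mem_range.mp hi; omega
  have h1 : 1 + i - 1 = i := by omega
  have h2 : d - (1 + i) = d - 1 - i := by omega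
  have h3 : 1 + i = i + 1 := by omega
  rw [h1, h2, h3, T_eq (d-1) i]
  have hsgn : (-1:ℝ)^(d-1-i) = (-1:ℝ)^(d-1) * (-1:ℝ)^i := by
    have ha : (-1:ℝ)^(d-1-i) * (-1:ℝ)^i = (-1:ℝ)^(d-1) := by
      rw [← pow_add]; congr 1; omega
    have hb : ((-1:ℝ)^i)*((-1:ℝ)^i) = 1 := by
      rw [← pow_add, ← two_mul, pow_mul]; norm_num
    linear_combination ((-1:ℝ)^i) * ha - ((-1:ℝ)^(d-1-i)) * hb
  have hnp : (-(2*Q))^(d-1-i) = (-1:ℝ)^(d-1-i) * (2*Q)^(d-1-i) := by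
    rw [neg_pow]
  rw [hnp, hsgn]
  ring
end

section
/- Let p, q be real numbers and let k be a positive integer such that V_k(p,q)² − 4q^k ≠ 0. Then for every n ≥ 1, s_2(n; p,q; k) = (U_k(p,q)/(V_k(p,q)² − 4q^k)) · ((n−1)·V_k(p,q)·U_{n·k}(p,q) − 2n·q^k·U_{(n−1)·k}(p,q)). -/
/-- `s_d(n; p, q; k) = ∑_{j₁ + ⋯ + j_d = n} ∏_{i=1}^{d} U_{k jᵢ}(p, q)`,
the sum being over `d`-tuples of nonnegative integers. -/
def sgen (p q : ℝ) (k d n : ℕ) : ℝ :=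
  ∑ t ∈ Finset.Nat.antidiagonalTuple d n, ∏ i, genU p q (k * t i)

lemma genU_rec (p q : ℝ) (n : ℕ) :
    genU p q (n + 2) = p * genU p q (n + 1) - q * genU p q n := rfl

-- addition formula
lemma genU_add (p q : ℝ) : ∀ n m, genU p q (m + n + 1) =
    genU p q (m + 1) * genU p q (n + 1) - q * genU p q m * genU p q n
  | 0, m => by simp [genU]
  | 1, m => by
    show genU p q (m + 2) = genU p q (m + 1) * genU p q 2 - q * genU p q m * genU p q 1
    rw [genU_rec]; simp [genU]; ring
  | (n + 2), m => by
    have h1 : genU p q (m + n + 2) =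
        genU p q (m + 1) * genU p q (n + 2) - q * genU p q m * genU p q (n + 1) :=
      genU_add p q (n + 1) m
    have h2 := genU_add p q n m
    show genU p q (m + n + 3) =
        genU p q (m + 1) * genU p q (n + 3) - q * genU p q m * genU p q (n + 2)
    have r1 : genU p q (m + n + 3) =
        p * genU p q (m + n + 2) - q * genU p q (m + n + 1) := genU_rec p q (m + n + 1)
    have r2 : genU p q (n + 3) = p * genU p q (n + 2) - q * genU p q (n + 1) :=
      genU_rec p q (n + 1)
    have r3 := genU_rec p q n
    linear_combination r1 + p * h1 - q * h2 - genU p q (m+1) * r2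
      + q * genU p q m * r3

-- Catalan / determinant identity
lemma genU_catalan (p q : ℝ) :
    ∀ n, genU p q (n + 1) ^ 2 - genU p q n * genU p q (n + 2) = q ^ n
  | 0 => by simp [genU]
  | (n + 1) => by
    have h := genU_catalan p q n
    have r2 : genU p q (n + 3) = p * genU p q (n + 2) - q * genU p q (n + 1) :=
      genU_rec p q (n + 1)
    have r1 := genU_rec p q n
    show genU p q (n + 2) ^ 2 - genU p q (n + 1) * genU p q (n + 3) = q ^ (n + 1)
    rw [pow_succ]
    linear_combination q * h - genU p q (n + 1) * r2
      + (genU p q (n + 2) + q * genU p q n) * r1 - q * genU p q n * r1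

lemma genV_eq (p q : ℝ) : ∀ n, genV p q (n + 1) = genU p q (n + 2) - q * genU p q n
  | 0 => by show genV p q 1 = genU p q 2 - q * genU p q 0; simp [genU, genV]
  | 1 => by
    show genV p q 2 = genU p q 3 - q * genU p q 1
    show p * genV p q 1 - q * genV p q 0 =
      (p * genU p q 2 - q * genU p q 1) - q * genU p q 1
    simp [genU, genV]; ring
  | (n + 2) => by
    have h1 := genV_eq p q n
    have h2 : genV p q (n + 2) = genU p q (n + 3) - q * genU p q (n + 1) :=
      genV_eq p q (n + 1)
    show p * genV p q (n + 2) - q * genV p q (n + 1) =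
        genU p q (n + 4) - q * genU p q (n + 2)
    have r1 : genU p q (n + 4) = p * genU p q (n + 3) - q * genU p q (n + 2) :=
      genU_rec p q (n + 2)
    have r2 : genU p q (n + 3) = p * genU p q (n + 2) - q * genU p q (n + 1) :=
      genU_rec p q (n + 1)
    have r3 := genU_rec p q n
    linear_combination p * h2 - q * h1 - r1 + q * r3

-- key shift: U_{m+2k} = V_k U_{m+k} - q^k U_m, for k ≥ 1
lemma genU_shift (p q : ℝ) (k : ℕ) (hk : 1 ≤ k) (m : ℕ) :
    genU p q (m + 2 * k) = genV p q k * genU p q (m + k) - q ^ k * genU p q m := by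
  obtain ⟨j, rfl⟩ : ∃ j, k = j + 1 := ⟨k - 1, by omega⟩
  have hV := genV_eq p q j
  have hcat := genU_catalan p q j
  have h1 : genU p q (m + (j + 1)) =
      genU p q (m + 1) * genU p q (j + 1) - q * genU p q m * genU p q j :=
    genU_add p q j m
  have h2 : genU p q (m + 2 * (j + 1)) =
      genU p q (m + (j + 1) + 1) * genU p q (j + 1)
        - q * genU p q (m + (j + 1)) * genU p q j := by
    have := genU_add p q j (m + (j + 1))
    rw [show m + (j + 1) + j + 1 = m + 2 * (j + 1) by ring] at this
    exact this
  have h3 : genU p q (m + (j + 1) + 1) =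
      genU p q (m + 1) * genU p q (j + 2) - q * genU p q m * genU p q (j + 1) := by
    have := genU_add p q (j + 1) m
    rw [show m + (j + 1) + 1 = m + (j + 1) + 1 from rfl] at this
    exact this
  rw [h2, h3, h1, hV, pow_succ]
  linear_combination (- q * genU p q m) * hcat
    + (q * genU p q m * genU p q (j + 1) - genU p q (m + 1) * genU p q (j + 1)
        - q ^ j * genU p q m + genU p q (m + 1) * genU p q (j + 1)
        - q * genU p q m * genU p q (j + 1) + q ^ j * genU p q m) * hV

noncomputable def Sconv (p q : ℝ) (k n : ℕ) : ℝ :=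
    ∑ j ∈ Finset.range (n + 1), genU p q (k * j) * genU p q (k * (n - j))

lemma Sconv_rec (p q : ℝ) (k : ℕ) (hk : 1 ≤ k) (n : ℕ) :
    Sconv p q k (n + 2) = genV p q k * Sconv p q k (n + 1) - q ^ k * Sconv p q k n
      + genU p q k * genU p q (k * (n + 1)) := by
  have key : ∀ j, j ≤ n → genU p q (k * (n + 2 - j)) =
      genV p q k * genU p q (k * (n + 1 - j)) - q ^ k * genU p q (k * (n - j)) := by
    intro j hj
    have e1 : n + 2 - j = (n - j) + 2 := by omega
    have e2 : n + 1 - j = (n - j) + 1 := by omega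
    rw [e1, e2, Nat.mul_add, Nat.mul_add, Nat.mul_one, mul_comm k 2]
    exact genU_shift p q k hk (k * (n - j))
  unfold Sconv
  rw [Finset.sum_range_succ, Finset.sum_range_succ]
  rw [Finset.sum_range_succ (n := n + 1)]
  have hsum : ∑ j ∈ Finset.range (n + 1), genU p q (k * j) * genU p q (k * (n + 2 - j))
      = genV p q k * ∑ j ∈ Finset.range (n + 1), genU p q (k * j) * genU p q (k * (n + 1 - j))
        - q ^ k * ∑ j ∈ Finset.range (n + 1), genU p q (k * j) * genU p q (k * (n - j)) := by
    rw [Finset.mul_sum, Finset.mul_sum, ← Finset.sum_sub_distrib]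
    apply Finset.sum_congr rfl
    intro j hj
    rw [key j (Nat.lt_succ_iff.mp (Finset.mem_range.mp hj))]
    ring
  rw [hsum]
  simp only [Nat.sub_self, Nat.mul_zero, Nat.add_sub_cancel_left, Nat.mul_one,
    Nat.add_sub_cancel]
  rw [show n + 2 - (n + 1) = 1 from by omega, Nat.mul_one]
  simp only [genU]
  ring
lemma sgen_eq_Sconv (p q : ℝ) (k n : ℕ) : sgen p q k 2 n = Sconv p q k n := by
  rw [sgen, Sconv, Finset.Nat.antidiagonalTuple_two, Finset.sum_map,
    Finset.Nat.sum_antidiagonal_eq_sum_range_succ_mk]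
  apply Finset.sum_congr rfl
  intro j hj
  simp [Fin.prod_univ_two]

lemma main_aux (p q : ℝ) (k : ℕ) (hk : 1 ≤ k)
    (hV : (genV p q k) ^ 2 - 4 * q ^ k ≠ 0) :
    ∀ n, Sconv p q k n = genU p q k / ((genV p q k) ^ 2 - 4 * q ^ k) *
      (((n : ℝ) - 1) * genV p q k * genU p q (n * k)
        - 2 * (n : ℝ) * q ^ k * genU p q ((n - 1) * k))
  | 0 => by simp [Sconv, genU, Nat.zero_mul]
  | 1 => by
    simp only [Sconv]
    rw [Finset.sum_range_succ, Finset.sum_range_succ]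
    simp [genU, Nat.zero_mul]
  | 2 => by
    simp only [Sconv]
    rw [Finset.sum_range_succ, Finset.sum_range_succ, Finset.sum_range_succ]
    have h2k : genU p q (2 * k) = genV p q k * genU p q k := by
      have := genU_shift p q k hk 0
      simpa [genU] using this
    simp only [Nat.mul_zero, Nat.sub_self, Nat.zero_mul, Nat.mul_one, Nat.one_mul]
    rw [show (2 : ℕ) - 1 = 1 from rfl, Nat.one_mul, mul_comm k 2, h2k]
    simp only [genU]
    push_cast
    field_simp
    ring
  | (n + 3) => by
    have ih2 := main_aux p q k hk hV (n + 2)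
    have ih1 := main_aux p q k hk hV (n + 1)
    have hrec : Sconv p q k (n + 3) = genV p q k * Sconv p q k (n + 2)
        - q ^ k * Sconv p q k (n + 1) + genU p q k * genU p q (k * (n + 2)) :=
      Sconv_rec p q k hk (n + 1)
    have w1 : genU p q ((n + 3) * k) =
        genV p q k * genU p q ((n + 2) * k) - q ^ k * genU p q ((n + 1) * k) := by
      have := genU_shift p q k hk ((n + 1) * k)
      rw [show (n + 1) * k + 2 * k = (n + 3) * k by ring,
        show (n + 1) * k + k = (n + 2) * k by ring] at this
      exact this
    have w2 : genU p q ((n + 2) * k) =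
        genV p q k * genU p q ((n + 1) * k) - q ^ k * genU p q (n * k) := by
      have := genU_shift p q k hk (n * k)
      rw [show n * k + 2 * k = (n + 2) * k by ring,
        show n * k + k = (n + 1) * k by ring] at this
      exact this
    rw [hrec, ih2, ih1]
    rw [show n + 3 - 1 = n + 2 from rfl, show n + 2 - 1 = n + 1 from rfl,
      show n + 1 - 1 = n from rfl, mul_comm k (n + 2)]
    set V := genV p q k with hVdef
    set Uk := genU p q k with hUkdef
    set Qk := q ^ k with hQkdef
    set W0 := genU p q (n * k) with hW0
    set W1 := genU p q ((n + 1) * k) with hW1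
    set W2 := genU p q ((n + 2) * k) with hW2
    set W3 := genU p q ((n + 3) * k) with hW3
    push_cast
    have key : (((n : ℝ) + 3) - 1) * V * W3 - 2 * ((n : ℝ) + 3) * Qk * W2 =
        V * ((((n : ℝ) + 2) - 1) * V * W2 - 2 * ((n : ℝ) + 2) * Qk * W1)
          - Qk * ((((n : ℝ) + 1) - 1) * V * W1 - 2 * ((n : ℝ) + 1) * Qk * W0)
          + (V ^ 2 - 4 * Qk) * W2 := by
      linear_combination (((n : ℝ) + 2) * V) * w1 - (2 * ((n : ℝ) + 1) * Qk) * w2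
    have hc : Uk / (V ^ 2 - 4 * Qk) * (V ^ 2 - 4 * Qk) = Uk := div_mul_cancel₀ _ hV
    linear_combination -(Uk / (V ^ 2 - 4 * Qk)) * key - W2 * hc


/-- The closed form for `s_2(n; p, q; k)`. -/
theorem stmt_5 (p q : ℝ) (k : ℕ) (hk : 1 ≤ k)
    (hV : (genV p q k) ^ 2 - 4 * q ^ k ≠ 0) (n : ℕ) (hn : 1 ≤ n) :
    sgen p q k 2 n =
      genU p q k / ((genV p q k) ^ 2 - 4 * q ^ k) *
        (((n : ℝ) - 1) * genV p q k * genU p q (n * k)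
          - 2 * (n : ℝ) * q ^ k * genU p q ((n - 1) * k)) := by
  rw [sgen_eq_Sconv]
  exact main_aux p q k hk hV n
end

section
/- For every integer n ≥ 1, Σ over all pairs (a,b) of nonnegative integers with a + b = n of F_a·F_b equals (1/5)·((n−1)·F_n + 2n·F_{n−1}), where F_m denotes the m-th Fibonacci number. -/
/-- Convolution sum of Fibonacci numbers over a range. -/
private def S (n : ℕ) : ℚ := ∑ k ∈ Finset.range (n + 1), (Nat.fib k : ℚ) * Nat.fib (n - k)

private lemma S_rec (n : ℕ) : S (n + 2) = Nat.fib (n + 1) + S (n + 1) + S n := by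
  unfold S
  rw [Finset.sum_range_succ, Finset.sum_range_succ, Finset.sum_range_succ (n := n + 1)]
  have h : ∀ k ∈ Finset.range (n + 1),
      (Nat.fib k : ℚ) * Nat.fib (n + 2 - k)
        = (Nat.fib k : ℚ) * Nat.fib (n + 1 - k) + (Nat.fib k : ℚ) * Nat.fib (n - k) := by
    intro k hk
    have hk' : k ≤ n := Nat.lt_succ_iff.mp (Finset.mem_range.mp hk)
    have h2 : n + 2 - k = (n - k) + 2 := by omega
    have h1 : n + 1 - k = (n - k) + 1 := by omega
    rw [h2, h1, Nat.fib_add_two]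
    push_cast
    ring
  rw [Finset.sum_congr rfl h, Finset.sum_add_distrib]
  simp [Nat.fib_zero, Nat.fib_one]
  ring

private lemma S_formula (n : ℕ) :
    S (n + 1) = (1 / 5) * ((n : ℚ) * Nat.fib (n + 1) + 2 * ((n : ℚ) + 1) * Nat.fib n) := by
  induction n using Nat.twoStepInduction with
  | zero => simp [S, Finset.sum_range_succ]
  | one => simp [S, Finset.sum_range_succ]; norm_num
  | more n ih1 ih2 =>
    rw [S_rec, ih1, ih2]
    have h3 : (Nat.fib (n + 2 + 1) : ℚ) = Nat.fib (n + 1 + 1) + Nat.fib (n + 1) := by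
      rw [show n + 2 + 1 = (n + 1) + 2 from rfl, Nat.fib_add_two]; push_cast; ring
    have h2 : (Nat.fib (n + 1 + 1) : ℚ) = Nat.fib (n + 1) + Nat.fib n := by
      rw [show n + 1 + 1 = n + 2 from rfl, Nat.fib_add_two]; push_cast; ring
    have h2' : (Nat.fib (n + 2) : ℚ) = Nat.fib (n + 1) + Nat.fib n := by
      rw [Nat.fib_add_two]; push_cast; ring
    rw [h3, h2]
    push_cast
    ring

/-- `∑_{a+b=n} F_a F_b = (1/5) ((n-1) F_n + 2n F_{n-1})` for `n ≥ 1`. -/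
theorem stmt_10 (n : ℕ) (hn : 1 ≤ n) :
    ∑ t ∈ Finset.Nat.antidiagonalTuple 2 n, ∏ i, (Nat.fib (t i) : ℚ) =
      (1 / 5) * (((n : ℚ) - 1) * (Nat.fib n : ℚ) + 2 * (n : ℚ) * (Nat.fib (n - 1) : ℚ)) := by
  obtain ⟨m, rfl⟩ : ∃ m, n = m + 1 := ⟨n - 1, by omega⟩
  rw [Finset.Nat.antidiagonalTuple_two, Finset.sum_map]
  have : ∑ ij ∈ Finset.HasAntidiagonal.antidiagonal (m + 1),
      ∏ i, (Nat.fib (((piFinTwoEquiv fun _ => ℕ).symm.toEmbedding ij) i) : ℚ)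
      = S (m + 1) := by
    rw [Finset.Nat.sum_antidiagonal_eq_sum_range_succ_mk]
    refine Finset.sum_congr rfl fun k _ => ?_
    simp [S, Fin.prod_univ_two, piFinTwoEquiv]
  rw [this, S_formula]
  push_cast
  ring_nf
end

section
/- For every integer n ≥ 3, Σ over all 4-tuples (a,b,c,d) of nonnegative integers with a + b + c + d = n of F_a·F_b·F_c·F_d equals (1/150)·((4n³−12n²−4n+12)·F_{n−2} + (3n³−6n²−3n+6)·F_{n−3}), where F_m denotes the m-th Fibonacci number. -/
open Finset

def convF (h : ℕ → ℚ) (n : ℕ) : ℚ := ∑ a ∈ Finset.range (n + 1), (Nat.fib a : ℚ) * h (n - a)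

lemma convF_zero (h : ℕ → ℚ) : convF h 0 = 0 := by simp [convF]

lemma convF_one (h : ℕ → ℚ) : convF h 1 = h 0 := by
  simp [convF, Finset.sum_range_succ]

lemma convF_rec (h : ℕ → ℚ) (n : ℕ) :
    convF h (n + 2) = convF h (n + 1) + convF h n + h (n + 1) := by
  have hfib : ∀ a : ℕ, (Nat.fib (a + 1 + 1) : ℚ) = Nat.fib (a + 1) + Nat.fib a := by
    intro a; rw [Nat.fib_add_two]; push_cast; ring
  have h1 : convF h (n + 1) = ∑ a ∈ Finset.range (n + 1), (Nat.fib (a + 1) : ℚ) * h (n - a) := by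
    rw [convF, Finset.sum_range_succ']
    simp
  have e : ∑ a ∈ Finset.range (n + 1), (Nat.fib (a + 1 + 1) : ℚ) * h (n - a)
      = convF h (n + 1) + convF h n := by
    rw [h1, convF, ← Finset.sum_add_distrib]
    exact Finset.sum_congr rfl fun a _ => by rw [hfib]; ring
  rw [convF, Finset.sum_range_succ', Finset.sum_range_succ']
  simp only [Nat.fib_zero, Nat.fib_one, Nat.cast_zero, Nat.cast_one, zero_mul, one_mul,
    add_zero, Nat.add_sub_add_right, Nat.add_sub_cancel, Nat.succ_sub_succ, Nat.sub_zero]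
  rw [e]
  norm_num

def fibQ (n : ℕ) : ℚ := Nat.fib n

def hh2 (n : ℕ) : ℚ := convF fibQ n
def hh3 (n : ℕ) : ℚ := convF hh2 n
def hh4 (n : ℕ) : ℚ := convF hh3 n

lemma fib_cast2 (n : ℕ) : (Nat.fib (n + 2) : ℚ) = Nat.fib (n + 1) + Nat.fib n := by
  rw [Nat.fib_add_two]; push_cast; ring

lemma fib_cast3 (n : ℕ) : (Nat.fib (n + 3) : ℚ) = 2 * Nat.fib (n + 1) + Nat.fib n := by
  rw [show n + 3 = n + 1 + 2 from rfl, fib_cast2, fib_cast2]; ring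

lemma hh2_closed (n : ℕ) :
    hh2 n = (2 * n * Nat.fib (n + 1) - (n + 1) * Nat.fib n) / 5 := by
  induction n using Nat.twoStepInduction with
  | zero => simp [hh2, convF_zero]
  | one => simp [hh2, convF_one, fibQ]; norm_num
  | more n ih1 ih2 =>
    show convF fibQ (n + 2) = _
    rw [convF_rec, show convF fibQ (n + 1) = hh2 (n + 1) from rfl,
      show convF fibQ n = hh2 n from rfl, ih1, ih2, fibQ]
    simp only [fib_cast3, fib_cast2]
    push_cast
    ring

lemma hh3_closed (n : ℕ) :
    hh3 n = (-3 * n / 25) * Nat.fib (n + 1)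
      + (-1 / 25 + 3 * n / 50 + n ^ 2 / 10) * Nat.fib n := by
  induction n using Nat.twoStepInduction with
  | zero => simp [hh3, convF_zero]
  | one => simp [hh3, convF_one, hh2, convF_zero]; norm_num
  | more n ih1 ih2 =>
    show convF hh2 (n + 2) = _
    rw [convF_rec, show convF hh2 (n + 1) = hh3 (n + 1) from rfl,
      show convF hh2 n = hh3 n from rfl, ih1, ih2, hh2_closed (n + 1)]
    simp only [fib_cast3, fib_cast2]
    push_cast
    ring

lemma hh4_closed (n : ℕ) :
    hh4 n = ((n : ℚ) ^ 3 - n) / 75 * Nat.fib (n + 1)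
      + (1 / 25 + n / 150 - n ^ 2 / 25 - n ^ 3 / 150) * Nat.fib n := by
  induction n using Nat.twoStepInduction with
  | zero => simp [hh4, convF_zero]
  | one => simp [hh4, convF_one, hh3, convF_zero]
  | more n ih1 ih2 =>
    show convF hh3 (n + 2) = _
    rw [convF_rec, show convF hh3 (n + 1) = hh4 (n + 1) from rfl,
      show convF hh3 n = hh4 n from rfl, ih1, ih2, hh3_closed (n + 1)]
    simp only [fib_cast3, fib_cast2]
    push_cast
    ring

lemma peel (f : ℕ → ℚ) (k n : ℕ) :
    ∑ t ∈ Finset.Nat.antidiagonalTuple (k + 1) n, ∏ i, f (t i)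
      = ∑ p ∈ Finset.HasAntidiagonal.antidiagonal n,
          f p.1 * ∑ t ∈ Finset.Nat.antidiagonalTuple k p.2, ∏ i, f (t i) := by
  simp only [Finset.mul_sum]
  rw [Finset.sum_sigma']
  refine Finset.sum_nbij' (fun t => ⟨(t 0, ∑ i, Fin.tail t i), Fin.tail t⟩)
    (fun x => Fin.cons x.1.1 x.2) ?_ ?_ ?_ ?_ ?_
  · intro t ht
    rw [Finset.Nat.mem_antidiagonalTuple] at ht
    refine Finset.mem_sigma.2 ⟨Finset.HasAntidiagonal.mem_antidiagonal.2 ?_, ?_⟩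
    · rw [← ht, ← Fin.sum_cons (t 0) (Fin.tail t), Fin.cons_self_tail]
    · exact Finset.Nat.mem_antidiagonalTuple.2 rfl
  · intro x hx
    rw [Finset.mem_sigma] at hx
    obtain ⟨h1, h2⟩ := hx
    rw [Finset.HasAntidiagonal.mem_antidiagonal] at h1
    rw [Finset.Nat.mem_antidiagonalTuple] at h2
    rw [Finset.Nat.mem_antidiagonalTuple, Fin.sum_cons, h2, h1]
  · intro t _
    exact Fin.cons_self_tail t
  · intro x hx
    rw [Finset.mem_sigma] at hx
    obtain ⟨_, h2⟩ := hx
    rw [Finset.Nat.mem_antidiagonalTuple] at h2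
    simp [Fin.tail_cons, h2]
  · intro t _
    rw [Fin.prod_univ_succ]
    rfl

lemma convF_antidiagonal (h : ℕ → ℚ) (n : ℕ) :
    ∑ p ∈ Finset.HasAntidiagonal.antidiagonal n, (Nat.fib p.1 : ℚ) * h p.2 = convF h n := by
  rw [Finset.Nat.sum_antidiagonal_eq_sum_range_succ_mk]; rfl

lemma tuple4 (n : ℕ) :
    ∑ t ∈ Finset.Nat.antidiagonalTuple 4 n, ∏ i, (Nat.fib (t i) : ℚ) = hh4 n := by
  have t1 : ∀ m, ∑ t ∈ Finset.Nat.antidiagonalTuple 1 m, ∏ i, (Nat.fib (t i) : ℚ)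
      = (Nat.fib m : ℚ) := by
    intro m; rw [Finset.Nat.antidiagonalTuple_one]; simp
  have t2 : ∀ m, ∑ t ∈ Finset.Nat.antidiagonalTuple 2 m, ∏ i, (Nat.fib (t i) : ℚ) = hh2 m := by
    intro m
    exact (peel (fun x => (Nat.fib x : ℚ)) 1 m).trans
      (by rw [Finset.sum_congr rfl fun p _ => by rw [t1 p.2]]; exact convF_antidiagonal (fun x => (Nat.fib x : ℚ)) m)
  have t3 : ∀ m, ∑ t ∈ Finset.Nat.antidiagonalTuple 3 m, ∏ i, (Nat.fib (t i) : ℚ) = hh3 m := by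
    intro m
    exact (peel (fun x => (Nat.fib x : ℚ)) 2 m).trans
      (by rw [Finset.sum_congr rfl fun p _ => by rw [t2 p.2], convF_antidiagonal]; rfl)
  exact (peel (fun x => (Nat.fib x : ℚ)) 3 n).trans
    (by rw [Finset.sum_congr rfl fun p _ => by rw [t3 p.2], convF_antidiagonal]; rfl)



/-- `∑_{a+b+c+d=n} F_a F_b F_c F_d
= (1/150) ((4n³-12n²-4n+12) F_{n-2} + (3n³-6n²-3n+6) F_{n-3})` for `n ≥ 3`. -/
theorem stmt_12 (n : ℕ) (hn : 3 ≤ n) :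
    ∑ t ∈ Finset.Nat.antidiagonalTuple 4 n, ∏ i, (Nat.fib (t i) : ℚ) =
      (1 / 150) *
        ((4 * (n : ℚ) ^ 3 - 12 * (n : ℚ) ^ 2 - 4 * (n : ℚ) + 12) * (Nat.fib (n - 2) : ℚ)
          + (3 * (n : ℚ) ^ 3 - 6 * (n : ℚ) ^ 2 - 3 * (n : ℚ) + 6) * (Nat.fib (n - 3) : ℚ)) := by
  obtain ⟨m, rfl⟩ : ∃ m, n = m + 3 := ⟨n - 3, by omega⟩
  rw [tuple4, hh4_closed]
  rw [show m + 3 - 2 = m + 1 from rfl, show m + 3 - 3 = m from rfl,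
    show m + 3 + 1 = m + 1 + 3 from rfl, fib_cast3 (m + 1), fib_cast2 m, fib_cast3 m]
  push_cast
  ring
end
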